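/- arXiv:1602.03230 — 2 statements merged into one kernel-verified Lean document; each statement's English description precedes it below -/
import Mathlib

section
/- Let T be a nonnegative tensor of order k ≥ 2 and dimension n with all row sums positive. Then min_{1 ≤ i ≤ n} m_i(T) ≤ ρ(T) ≤ max_{1 ≤ i ≤ n} m_i(T), where ρ(T) is the spectral radius of T and m_i(T) is the i-th average 2-row sum. -/
/-- The `i`-th row sum of an order-`k` tensor of dimension `n`. -/
noncomputable def rowSum (n k : ℕ) (T : Fin n → (Fin (k-1) → Fin n) → ℝ) (i : Fin n) : ℝ :=
  ∑ f : Fin (k-1) → Fin n, T i f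

/-- The `i`-th average 2-row sum of an order-`k` tensor of dimension `n`. -/
noncomputable def avgRowSum (n k : ℕ) (T : Fin n → (Fin (k-1) → Fin n) → ℝ) (i : Fin n) : ℝ :=
  (∑ f : Fin (k-1) → Fin n, T i f * ∏ a, rowSum n k T (f a)) / (rowSum n k T i) ^ (k-1)

/-- The spectral radius of an order-`k` tensor of dimension `n`: the largest modulus of its
(complex) eigenvalues, where `ρ` is an eigenvalue if `T x = ρ x^{[k-1]}` for some `x ≠ 0`. -/
noncomputable def specRad (n k : ℕ) (T : Fin n → (Fin (k-1) → Fin n) → ℝ) : ℝ :=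
  sSup {r : ℝ | ∃ ρ : ℂ, ‖ρ‖ = r ∧ ∃ x : Fin n → ℂ, x ≠ 0 ∧
    ∀ i, (∑ f : Fin (k-1) → Fin n, (T i f : ℂ) * ∏ a, x (f a)) = ρ * x i ^ (k-1)}

/-!
For an eigenpair `(ρ, x)` and any positive weight vector `y`, look at the index `i` maximizing
`|x_i| / y_i =: c`. Then `|ρ| |x_i|^{k-1} ≤ (T|x|)_i ≤ c^{k-1} (T y)_i`, so `|ρ|` is at most
`(T y)_i / y_i^{k-1}`; with `y` the vector of row sums this quotient is `m_i(T)`, giving the upper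
bound. For the lower bound, the row-sum vector `r` satisfies
`(T r)_i = m_i r_i^{k-1} ≥ (min m) r_i^{k-1}`, and the Perron eigenvalue of a nonnegative tensor
dominates every such `t` with `t r^{[k-1]} ≤ T r`.
-/

open Filter Topology

section Tensor

variable {ι : Type*} [Fintype ι] {d : ℕ}

noncomputable def tensorApply (P : ι → (Fin d → ι) → ℝ) (z : ι → ℝ) (i : ι) : ℝ :=
  ∑ f : Fin d → ι, P i f * ∏ a, z (f a)

def IsSubeigenpair (P : ι → (Fin d → ι) → ℝ) (t : ℝ) (z : ι → ℝ) : Prop :=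
  ∀ i, t * z i ^ d ≤ tensorApply P z i

lemma tensorApply_smul (P : ι → (Fin d → ι) → ℝ) (c : ℝ) (z : ι → ℝ) (i : ι) :
    tensorApply P (c • z) i = c ^ d * tensorApply P z i := by
  simp only [tensorApply, Pi.smul_apply, smul_eq_mul, Finset.prod_mul_distrib,
    Finset.prod_const, Finset.card_univ, Fintype.card_fin, Finset.mul_sum]
  exact Finset.sum_congr rfl fun f _ => by ring

lemma tensorApply_nonneg {P : ι → (Fin d → ι) → ℝ} (hP : ∀ i f, 0 ≤ P i f) {z : ι → ℝ}
    (hz : ∀ i, 0 ≤ z i) (i : ι) : 0 ≤ tensorApply P z i :=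
  Finset.sum_nonneg fun f _ => mul_nonneg (hP i f) (Finset.prod_nonneg fun _ _ => hz _)

lemma tensorApply_le_tensorApply {P Q : ι → (Fin d → ι) → ℝ} (hP : ∀ i f, 0 ≤ P i f)
    (hPQ : ∀ i f, P i f ≤ Q i f) {z w : ι → ℝ} (hz : ∀ i, 0 ≤ z i) (hzw : ∀ i, z i ≤ w i)
    (i : ι) : tensorApply P z i ≤ tensorApply Q w i := by
  refine Finset.sum_le_sum fun f _ => mul_le_mul (hPQ i f) ?_
    (Finset.prod_nonneg fun _ _ => hz _) ((hP i f).trans (hPQ i f))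
  exact Finset.prod_le_prod (fun _ _ => hz _) fun _ _ => hzw _

lemma tensorApply_lt_tensorApply {P : ι → (Fin d → ι) → ℝ} (hP : ∀ i f, 0 < P i f)
    {z w : ι → ℝ} (hz : ∀ i, 0 ≤ z i) (hzw : ∀ i, z i ≤ w i) {j : ι} (hj : z j < w j)
    (hd : d ≠ 0) (i : ι) : tensorApply P z i < tensorApply P w i := by
  refine Finset.sum_lt_sum (fun f _ => ?_) ⟨fun _ => j, Finset.mem_univ _, ?_⟩
  · exact mul_le_mul_of_nonneg_left
      (Finset.prod_le_prod (fun _ _ => hz _) fun _ _ => hzw _) (hP i f).le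
  · simp only [Finset.prod_const, Finset.card_univ, Fintype.card_fin]
    gcongr
    exacts [hP i _, hz j]

lemma tensorApply_pos {P : ι → (Fin d → ι) → ℝ} (hP : ∀ i f, 0 < P i f) {z : ι → ℝ}
    (hz : ∀ i, 0 ≤ z i) (hz0 : z ≠ 0) (hd : d ≠ 0) (i : ι) : 0 < tensorApply P z i := by
  obtain ⟨j, hj⟩ := Function.ne_iff.mp hz0
  simpa [tensorApply, zero_pow hd] using
    tensorApply_lt_tensorApply hP (fun _ => le_rfl) hz (lt_of_le_of_ne (hz j) hj.symm) hd i

lemma continuous_tensorApply (i : ι) :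
    Continuous fun p : (ι → (Fin d → ι) → ℝ) × (ι → ℝ) => tensorApply p.1 p.2 i := by
  unfold tensorApply
  fun_prop

lemma IsSubeigenpair.smul {P : ι → (Fin d → ι) → ℝ} {t : ℝ} {z : ι → ℝ}
    (h : IsSubeigenpair P t z) {c : ℝ} (hc : 0 ≤ c) : IsSubeigenpair P t (c • z) := fun i => by
  rw [tensorApply_smul, Pi.smul_apply, smul_eq_mul, mul_pow, mul_left_comm]
  exact mul_le_mul_of_nonneg_left (h i) (by positivity)

lemma IsSubeigenpair.le_of_tensorApply_le {P : ι → (Fin d → ι) → ℝ} (hP : ∀ i f, 0 ≤ P i f)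
    {t : ℝ} {z : ι → ℝ} (h : IsSubeigenpair P t z) (hz : ∀ i, 0 ≤ z i) (hz0 : z ≠ 0)
    {y : ι → ℝ} (hy : ∀ i, 0 < y i) {C : ℝ} (hC : ∀ i, tensorApply P y i ≤ C * y i ^ d) :
    t ≤ C := by
  obtain ⟨j, hj⟩ := Function.ne_iff.mp hz0
  have : Nonempty ι := ⟨j⟩
  obtain ⟨i, hi⟩ := Finite.exists_max fun i => z i / y i
  set c := z i / y i
  have hc : 0 < c := (div_pos (lt_of_le_of_ne (hz j) (Ne.symm hj)) (hy j)).trans_le (hi j)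
  have hzc : ∀ l, z l ≤ (c • y) l := fun l => (div_le_iff₀ (hy l)).mp (hi l)
  have hzi : z i = c * y i := (div_mul_cancel₀ _ (hy i).ne').symm
  have key : t * z i ^ d ≤ C * z i ^ d :=
    calc t * z i ^ d ≤ tensorApply P z i := h i
      _ ≤ tensorApply P (c • y) i := tensorApply_le_tensorApply hP (fun _ _ => le_rfl) hz hzc i
      _ = c ^ d * tensorApply P y i := tensorApply_smul P c y i
      _ ≤ c ^ d * (C * y i ^ d) := by gcongr; exact hC i
      _ = C * z i ^ d := by rw [hzi, mul_pow]; ring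
  exact le_of_mul_le_mul_right key (pow_pos (hzi ▸ mul_pos hc (hy i)) d)

lemma ne_zero_of_mem_stdSimplex {z : ι → ℝ} (hz : z ∈ stdSimplex ℝ ι) : z ≠ 0 := by
  rintro rfl
  simpa using hz.2

lemma inv_sum_smul_mem_stdSimplex [Nonempty ι] {y : ι → ℝ} (hy : ∀ i, 0 < y i) :
    (∑ i, y i)⁻¹ • y ∈ stdSimplex ℝ ι := by
  have hsum : 0 < ∑ i, y i := Finset.sum_pos (fun i _ => hy i) Finset.univ_nonempty
  exact ⟨fun i => mul_nonneg (inv_nonneg.mpr hsum.le) (hy i).le,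
    by simp [← Finset.mul_sum, inv_mul_cancel₀ hsum.ne']⟩

lemma IsSubeigenpair.exists_gt_of_ne {P : ι → (Fin d → ι) → ℝ} (hP : ∀ i f, 0 < P i f)
    (hd : d ≠ 0) {r : ℝ} {z : ι → ℝ} (h : IsSubeigenpair P r z) (hr : 0 ≤ r)
    (hz : ∀ i, 0 ≤ z i) (hz0 : z ≠ 0) {j : ι} (hj : r * z j ^ d ≠ tensorApply P z j) :
    ∃ t y, (∀ i, 0 < y i) ∧ IsSubeigenpair P t y ∧ r < t := by
  have : Nonempty ι := ⟨j⟩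
  have hPz := tensorApply_pos hP hz hz0 hd
  set w : ι → ℝ := fun i => tensorApply P z i ^ (d⁻¹ : ℝ)
  set s : ℝ := r ^ (d⁻¹ : ℝ)
  have hw0 : ∀ i, 0 < w i := fun i => Real.rpow_pos_of_pos (hPz i) _
  have hw : ∀ i, w i ^ d = tensorApply P z i := fun i => Real.rpow_inv_natCast_pow (hPz i).le hd
  have hs : s ^ d = r := Real.rpow_inv_natCast_pow hr hd
  have hsz0 : ∀ i, 0 ≤ (s • z) i := fun i => mul_nonneg (Real.rpow_nonneg hr _) (hz i)
  have hszw : ∀ i, (s • z) i ^ d = r * z i ^ d := fun i => by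
    rw [Pi.smul_apply, smul_eq_mul, mul_pow, hs]
  have hsz : ∀ i, (s • z) i ≤ w i := fun i =>
    (pow_le_pow_iff_left₀ (hsz0 i) (hw0 i).le hd).mp (by rw [hszw, hw]; exact h i)
  have hszj : (s • z) j < w j :=
    (pow_lt_pow_iff_left₀ (hsz0 j) (hw0 j).le hd).mp
      (by rw [hszw, hw]; exact lt_of_le_of_ne (h j) hj)
  -- `w = (P z)^{[1/d]}` lies above `r^{1/d} z`, strictly at `j`, so positivity of `P` makes
  -- every coordinate of `P w` exceed `r w^{[d]}`.
  have hlt : ∀ i, r * w i ^ d < tensorApply P w i := fun i =>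
    calc r * w i ^ d = tensorApply P (s • z) i := by rw [tensorApply_smul, hs, hw]
      _ < tensorApply P w i := tensorApply_lt_tensorApply hP hsz0 hsz hszj hd i
  obtain ⟨i₀, hi₀⟩ := Finite.exists_min fun i => tensorApply P w i / w i ^ d
  exact ⟨_, w, hw0, fun i => (le_div_iff₀ (pow_pos (hw0 i) d)).mp (hi₀ i),
    (lt_div_iff₀ (pow_pos (hw0 i₀) d)).mpr (hlt i₀)⟩

/-- Perron–Frobenius for positive tensors: the largest `t` admitting a normalized subeigenvector
is an eigenvalue. -/
lemma exists_eigenpair_of_pos [Nonempty ι] {P : ι → (Fin d → ι) → ℝ} (hP : ∀ i f, 0 < P i f)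
    (hd : d ≠ 0) :
    ∃ r z, z ∈ stdSimplex ℝ ι ∧ (∀ i, tensorApply P z i = r * z i ^ d) ∧
      ∀ t y, (∀ i, 0 < y i) → IsSubeigenpair P t y → t ≤ r := by
  have hP0 : ∀ i f, 0 ≤ P i f := fun i f => (hP i f).le
  obtain ⟨M, hM⟩ := (Set.finite_range fun i => tensorApply P 1 i).bddAbove
  have hM' : ∀ i, tensorApply P 1 i ≤ M * (1 : ι → ℝ) i ^ d := fun i => by
    simpa using hM ⟨i, rfl⟩
  set A := (Set.Icc 0 M ×ˢ stdSimplex ℝ ι) ∩ {p | IsSubeigenpair P p.1 p.2}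
  have hA : IsCompact A := (isCompact_Icc.prod (isCompact_stdSimplex ℝ ι)).inter_right <| by
    simp only [IsSubeigenpair, Set.ofPred_forall]
    exact isClosed_iInter fun i =>
      isClosed_le (by fun_prop) ((continuous_tensorApply i).comp
        (continuous_const.prodMk continuous_snd : Continuous fun p : ℝ × (ι → ℝ) => (P, p.2)))
  have hmem : ∀ t y, (∀ i, 0 < y i) → IsSubeigenpair P t y → 0 ≤ t →
      (t, (∑ i, y i)⁻¹ • y) ∈ A := by
    intro t y hy hty ht
    have hv := inv_sum_smul_mem_stdSimplex hy
    have htv : IsSubeigenpair P t ((∑ i, y i)⁻¹ • y) :=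
      hty.smul (inv_nonneg.mpr (Finset.sum_nonneg fun i _ => (hy i).le))
    exact ⟨⟨⟨ht, htv.le_of_tensorApply_le hP0 hv.1 (ne_zero_of_mem_stdSimplex hv)
      (fun _ => one_pos) hM'⟩, hv⟩, htv⟩
  have h01 : IsSubeigenpair P 0 1 := fun i => by
    simpa using tensorApply_nonneg hP0 (z := 1) (fun _ => zero_le_one) i
  obtain ⟨⟨r, z⟩, hrz, hmax⟩ := hA.exists_isMaxOn ⟨_, hmem 0 1 (fun _ => one_pos) h01 le_rfl⟩
    continuous_fst.continuousOn
  have hlow : ∀ t y, (∀ i, 0 < y i) → IsSubeigenpair P t y → t ≤ r := by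
    intro t y hy hty
    rcases le_or_gt t 0 with ht | ht
    · exact ht.trans hrz.1.1.1
    · exact hmax (hmem t y hy hty ht.le)
  refine ⟨r, z, hrz.1.2, fun j => ?_, hlow⟩
  by_contra hj
  obtain ⟨t, y, hy, hty, hrt⟩ := hrz.2.exists_gt_of_ne hP hd hrz.1.1.1 hrz.1.2.1
    (ne_zero_of_mem_stdSimplex hrz.1.2) (Ne.symm hj)
  exact (hlow t y hy hty).not_gt hrt

/-- Perron–Frobenius for nonnegative tensors, by perturbing to `S + 1/(m+1)` and passing to a
convergent subsequence of the Perron eigenpairs. -/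
lemma exists_eigenpair_of_nonneg [Nonempty ι] {S : ι → (Fin d → ι) → ℝ}
    (hS : ∀ i f, 0 ≤ S i f) (hd : d ≠ 0) :
    ∃ r z, z ∈ stdSimplex ℝ ι ∧ (∀ i, tensorApply S z i = r * z i ^ d) ∧
      ∀ t y, (∀ i, 0 < y i) → IsSubeigenpair S t y → t ≤ r := by
  set P : ℕ → ι → (Fin d → ι) → ℝ := fun m i f => S i f + 1 / (m + 1)
  have hPpos : ∀ m i f, 0 < P m i f := fun m i f => by have := hS i f; positivity
  have hP0 : ∀ m i f, 0 ≤ P m i f := fun m i f => (hPpos m i f).le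
  have hSP : ∀ m i f, S i f ≤ P m i f := fun m i f => le_add_of_nonneg_right (by positivity)
  have hP1 : ∀ m i f, P m i f ≤ S i f + 1 := fun m i f =>
    add_le_add_right (div_le_one_of_le₀ (le_add_of_nonneg_left (Nat.cast_nonneg (α := ℝ) m))
      (Nat.cast_add_one_pos m).le) _
  have hPS : Tendsto P atTop (𝓝 S) := tendsto_pi_nhds.mpr fun i => tendsto_pi_nhds.mpr fun f => by
    simpa [P] using (tendsto_const_nhds (x := S i f)).add
      (tendsto_one_div_add_atTop_nhds_zero_nat (𝕜 := ℝ))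
  obtain ⟨B, hB⟩ := (Set.finite_range fun i => tensorApply (fun i f => S i f + 1) 1 i).bddAbove
  choose r z hz heig hlow using fun m => exists_eigenpair_of_pos (hPpos m) hd
  have hrB : ∀ m, r m ∈ Set.Icc 0 B := fun m => by
    have h01 : IsSubeigenpair (P m) 0 1 := fun i => by
      simpa using tensorApply_nonneg (hP0 m) (z := 1) (fun _ => zero_le_one) i
    have hPB : ∀ i, tensorApply (P m) 1 i ≤ B * (1 : ι → ℝ) i ^ d := fun i => by
      simpa using (tensorApply_le_tensorApply (hP0 m) (hP1 m) (z := 1) (w := 1)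
        (fun _ => zero_le_one) (fun _ => le_rfl) i).trans (hB ⟨i, rfl⟩)
    exact ⟨hlow m 0 1 (fun _ => one_pos) h01,
      IsSubeigenpair.le_of_tensorApply_le (hP0 m) (fun i => (heig m i).ge) (hz m).1
        (ne_zero_of_mem_stdSimplex (hz m)) (fun _ => one_pos) hPB⟩
  obtain ⟨⟨ρ, x⟩, ⟨-, hx⟩, φ, hφ, hlim⟩ :=
    (isCompact_Icc.prod (isCompact_stdSimplex ℝ ι)).tendsto_subseq
      (x := fun m => (r m, z m)) fun m => ⟨hrB m, hz m⟩
  refine ⟨ρ, x, hx, fun i => ?_, fun t y hy hty => ?_⟩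
  · have hclosed : IsClosed {p : (ι → (Fin d → ι) → ℝ) × ℝ × (ι → ℝ) |
        tensorApply p.1 p.2.2 i = p.2.1 * p.2.2 i ^ d} :=
      isClosed_eq ((continuous_tensorApply i).comp
        (continuous_fst.prodMk (continuous_snd.comp continuous_snd))) (by fun_prop)
    exact hclosed.mem_of_tendsto ((hPS.comp hφ.tendsto_atTop).prodMk_nhds hlim)
      (Eventually.of_forall fun m => heig (φ m) i)
  · refine ge_of_tendsto ((continuous_fst.tendsto _).comp hlim)
      (Eventually.of_forall fun m => ?_)
    exact hlow (φ m) t y hy fun i => (hty i).trans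
      (tensorApply_le_tensorApply hS (hSP _) (fun i => (hy i).le) (fun _ => le_rfl) i)

lemma norm_le_of_eigen {P : ι → (Fin d → ι) → ℝ} (hP : ∀ i f, 0 ≤ P i f) {ρ : ℂ}
    {x : ι → ℂ} (hx : x ≠ 0)
    (heq : ∀ i, ∑ f : Fin d → ι, (P i f : ℂ) * ∏ a, x (f a) = ρ * x i ^ d)
    {y : ι → ℝ} (hy : ∀ i, 0 < y i) {C : ℝ} (hC : ∀ i, tensorApply P y i ≤ C * y i ^ d) :
    ‖ρ‖ ≤ C := by
  have hsub : IsSubeigenpair P ‖ρ‖ fun i => ‖x i‖ := fun i =>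
    calc ‖ρ‖ * ‖x i‖ ^ d = ‖∑ f : Fin d → ι, (P i f : ℂ) * ∏ a, x (f a)‖ := by
          rw [heq, norm_mul, norm_pow]
      _ ≤ tensorApply P (fun i => ‖x i‖) i := by
          refine (norm_sum_le _ _).trans_eq (Finset.sum_congr rfl fun f _ => ?_)
          rw [norm_mul, norm_prod, Complex.norm_real, Real.norm_of_nonneg (hP i f)]
  exact hsub.le_of_tensorApply_le hP (fun i => norm_nonneg _)
    (fun h => hx (funext fun i => norm_eq_zero.mp (congrFun h i))) hy hC

end Tensor

lemma tensorApply_rowSum {n k : ℕ} (T : Fin n → (Fin (k-1) → Fin n) → ℝ) {i : Fin n}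
    (hi : rowSum n k T i ≠ 0) :
    tensorApply T (rowSum n k T) i = avgRowSum n k T i * rowSum n k T i ^ (k-1) :=
  (div_mul_cancel₀ _ (pow_ne_zero _ hi)).symm

/-- For a nonnegative tensor of order `k ≥ 2` and dimension `n` with all row sums positive,
`min_i m_i(T) ≤ ρ(T) ≤ max_i m_i(T)`. -/
theorem stmt2 (n k : ℕ) (hn : 0 < n) (hk : 2 ≤ k)
    (T : Fin n → (Fin (k-1) → Fin n) → ℝ)
    (hT : ∀ i f, 0 ≤ T i f) (hr : ∀ i, 0 < rowSum n k T i) :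
    Finset.univ.inf' ⟨⟨0, hn⟩, Finset.mem_univ _⟩ (fun i => avgRowSum n k T i)
        ≤ specRad n k T ∧
      specRad n k T ≤
        Finset.univ.sup' ⟨⟨0, hn⟩, Finset.mem_univ _⟩ (fun i => avgRowSum n k T i) := by
  have : Nonempty (Fin n) := ⟨⟨0, hn⟩⟩
  have hm : ∀ i, tensorApply T (rowSum n k T) i = avgRowSum n k T i * rowSum n k T i ^ (k-1) :=
    fun i => tensorApply_rowSum T (hr i).ne'
  unfold specRad
  set E : Set ℝ := {r | ∃ ρ : ℂ, ‖ρ‖ = r ∧ ∃ x : Fin n → ℂ, x ≠ 0 ∧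
    ∀ i, (∑ f : Fin (k-1) → Fin n, (T i f : ℂ) * ∏ a, x (f a)) = ρ * x i ^ (k-1)}
  have hub : ∀ r ∈ E, r ≤ Finset.univ.sup' Finset.univ_nonempty (fun i => avgRowSum n k T i) := by
    rintro _ ⟨ρ, rfl, x, hx, heq⟩
    refine norm_le_of_eigen hT hx heq hr fun i => (hm i).trans_le ?_
    exact mul_le_mul_of_nonneg_right (Finset.le_sup' _ (Finset.mem_univ i))
      (pow_nonneg (hr i).le _)
  obtain ⟨ρ, z, hz, heig, hlow⟩ := exists_eigenpair_of_nonneg hT (by omega : k - 1 ≠ 0)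
  have hρ : |ρ| ∈ E := ⟨ρ, by simp, fun i => z i,
    fun h => ne_zero_of_mem_stdSimplex hz (funext fun i => by simpa using congrFun h i),
    fun i => by simpa [tensorApply] using congrArg ((↑) : ℝ → ℂ) (heig i)⟩
  have hmin : Finset.univ.inf' Finset.univ_nonempty (fun i => avgRowSum n k T i) ≤ ρ :=
    hlow _ _ hr fun i => (hm i).symm ▸
      mul_le_mul_of_nonneg_right (Finset.inf'_le _ (Finset.mem_univ i)) (pow_nonneg (hr i).le _)
  exact ⟨hmin.trans ((le_abs_self ρ).trans (le_csSup ⟨_, hub⟩ hρ)), csSup_le ⟨_, hρ⟩ hub⟩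
end

section
/- Let G be a k-uniform hypergraph on n vertices without isolated vertices, with average 2-degrees m₁ ≥ m₂ ≥ … ≥ m_n. Then the spectral radius of the adjacency tensor of G satisfies ρ(G) ≤ m₁^{1/k} · m₂^{1−1/k}. -/
/-- A hypergraph on vertex set `Fin n` is a finite set of edges; `hDeg` is the degree of
vertex `i`, the number of edges containing `i`. -/
def hDeg (n : ℕ) (E : Finset (Finset (Fin n))) (i : Fin n) : ℕ :=
  (E.filter (fun e => i ∈ e)).card

/-- The average 2-degree of vertex `i` in a `k`-uniform hypergraph:
`m_i = (Σ_{{i,i₂,…,i_k} ∈ E_i} d_{i₂} ⋯ d_{i_k}) / d_i^{k-1}`. -/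
noncomputable def avg2 (n k : ℕ) (E : Finset (Finset (Fin n))) (i : Fin n) : ℝ :=
  (∑ e ∈ E.filter (fun e => i ∈ e), ∏ j ∈ e.erase i, (hDeg n E j : ℝ)) /
    (hDeg n E i : ℝ) ^ (k-1)

/-- The adjacency tensor of a `k`-uniform hypergraph: entry `1/(k-1)!` at `(i₁,…,i_k)` when
`{i₁,…,i_k}` is an edge, and `0` otherwise. -/
noncomputable def adjT (n k : ℕ) (E : Finset (Finset (Fin n))) :
    Fin n → (Fin (k-1) → Fin n) → ℝ :=
  fun i f => if insert i (Finset.image f Finset.univ) ∈ E then 1 / (k-1).factorial else 0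

/-- The signless Laplacian tensor `Q(G) = D(G) + A(G)`. -/
noncomputable def qT (n k : ℕ) (E : Finset (Finset (Fin n))) :
    Fin n → (Fin (k-1) → Fin n) → ℝ :=
  fun i f => (if ∀ a, f a = i then (hDeg n E i : ℝ) else 0) + adjT n k E i f

/-- A hypergraph is connected if every pair of distinct vertices is joined by a sequence of
pairwise intersecting edges. -/
def HConn (n : ℕ) (E : Finset (Finset (Fin n))) : Prop :=
  ∀ u v : Fin n, u ≠ v → ∃ r : ℕ, ∃ es : Fin (r+1) → Finset (Fin n),
    (∀ s, es s ∈ E) ∧ u ∈ es 0 ∧ v ∈ es (Fin.last r) ∧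
    ∀ s : Fin r, (es s.castSucc ∩ es s.succ).Nonempty

/-!
Take an eigenpair `(ρ, x)` and put `z j = ‖x j‖ / d j`. Taking norms in the eigen-equation, and
using that each edge through `i` occurs in row `i` at most `(k-1)!` times with weight `1/(k-1)!`,
gives `‖ρ‖ (d_i z_i)^{k-1} ≤ ∑_{e ∋ i} ∏_{j ∈ e \ i} d_j z_j`. Let `p` maximise `z` and `q` maximise
`z` away from `p`. Bounding the `z_j` in these products yields `‖ρ‖ z_p^{k-1} ≤ m_p z_q^{k-1}` and
`‖ρ‖ z_q^{k-1} ≤ m_q z_p z_q^{k-2}`; eliminating `z_p, z_q` gives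
`‖ρ‖^k ≤ max(m_p, m_q) · min(m_p, m_q)^{k-1}`, and since `p ≠ q` the maximum is at most `m₁` and
the minimum at most `m₂`.
-/

open Finset

section Counting

variable {ι α : Type*} [Fintype ι] [DecidableEq α]

theorem injective_of_image_univ_eq {f : ι → α} {s : Finset α} (hf : image f univ = s)
    (hs : #s = Fintype.card ι) : Function.Injective f := by
  rw [← Set.injOn_univ, ← coe_univ]
  exact injOn_of_card_image_eq (by rw [hf, hs, card_univ])

variable [DecidableEq ι] [Fintype α]

theorem card_filter_image_univ_eq_le_factorial (s : Finset α) (hs : #s = Fintype.card ι) :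
    #{f : ι → α | image f univ = s} ≤ (Fintype.card ι).factorial := by
  classical
  calc #{f : ι → α | image f univ = s}
      ≤ #((univ : Finset (ι ↪ s)).image fun g a => (g a : α)) := by
        refine card_le_card fun f hf => ?_
        have hfs : image f univ = s := (mem_filter.mp hf).2
        have hmem : ∀ a, f a ∈ s := fun a => hfs ▸ mem_image_of_mem f (mem_univ a)
        have hinj := injective_of_image_univ_eq hfs hs
        refine mem_image.mpr ⟨⟨fun a => ⟨f a, hmem a⟩, fun a b h => hinj ?_⟩, mem_univ _, rfl⟩
        exact congrArg Subtype.val h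
    _ ≤ Fintype.card (ι ↪ s) := card_image_le
    _ = (Fintype.card ι).factorial := by
        rw [Fintype.card_embedding_eq, Fintype.card_coe, hs, Nat.descFactorial_self]

theorem sum_prod_comp_le_factorial_mul (s : Finset α) (hs : #s = Fintype.card ι) (w : α → ℝ)
    (hw : ∀ j ∈ s, 0 ≤ w j) :
    ∑ f : ι → α with image f univ = s, ∏ a, w (f a) ≤
      (Fintype.card ι).factorial * ∏ j ∈ s, w j := by
  classical
  calc ∑ f : ι → α with image f univ = s, ∏ a, w (f a)
      = ∑ f : ι → α with image f univ = s, ∏ j ∈ s, w j := by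
        refine sum_congr rfl fun f hf => ?_
        have hfs : image f univ = s := (mem_filter.mp hf).2
        rw [← hfs, prod_image fun a _ b _ h => injective_of_image_univ_eq hfs hs h]
    _ ≤ (Fintype.card ι).factorial * ∏ j ∈ s, w j := by
        rw [sum_const, nsmul_eq_mul]
        exact mul_le_mul_of_nonneg_right
          (by exact_mod_cast card_filter_image_univ_eq_le_factorial s hs) (prod_nonneg hw)

end Counting

theorem erase_eq_of_insert_eq {α : Type*} [DecidableEq α] {t e : Finset α} {i : α}
    (h : insert i t = e) (ht : #t ≤ #e - 1) : e.erase i = t := by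
  subst h
  have hi : i ∉ t := fun hi => by
    rw [insert_eq_of_mem hi] at ht
    have := card_pos.mpr ⟨i, hi⟩
    omega
  exact erase_insert hi

variable {n k : ℕ} {E : Finset (Finset (Fin n))}

theorem sum_adjT_mul_prod_le (hcard : ∀ e ∈ E, #e = k) (i : Fin n) (w : Fin n → ℝ)
    (hw : ∀ j, 0 ≤ w j) :
    ∑ f, adjT n k E i f * ∏ a, w (f a) ≤ ∑ e ∈ E with i ∈ e, ∏ j ∈ e.erase i, w j := by
  set c : ℝ := 1 / (k-1).factorial
  have hmaps : ∀ f ∈ ({f | insert i (image f univ) ∈ E} : Finset (Fin (k-1) → Fin n)),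
      insert i (image f univ) ∈ ({e ∈ E | i ∈ e} : Finset _) := fun f hf =>
    mem_filter.mpr ⟨(mem_filter.mp hf).2, mem_insert_self i _⟩
  calc ∑ f, adjT n k E i f * ∏ a, w (f a)
      = ∑ f with insert i (image f univ) ∈ E, c * ∏ a, w (f a) := by
        rw [sum_filter]
        refine sum_congr rfl fun f _ => ?_
        unfold adjT
        split_ifs <;> simp [c]
    _ = ∑ e ∈ E with i ∈ e, ∑ f ∈ ({f | insert i (image f univ) ∈ E} : Finset _) with
          insert i (image f univ) = e, c * ∏ a, w (f a) :=
        (sum_fiberwise_of_maps_to hmaps _).symm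
    _ ≤ ∑ e ∈ E with i ∈ e, ∑ f : Fin (k-1) → Fin n with image f univ = e.erase i,
          c * ∏ a, w (f a) := by
        refine sum_le_sum fun e he => sum_le_sum_of_subset_of_nonneg ?_ fun f _ _ =>
          mul_nonneg (by positivity) (prod_nonneg fun a _ => hw (f a))
        intro f hf
        simp only [mem_filter, mem_univ, true_and] at hf ⊢
        refine (erase_eq_of_insert_eq hf.2 ?_).symm
        rw [hcard e (mem_filter.mp he).1]
        simpa using card_image_le (s := univ) (f := f)
    _ ≤ ∑ e ∈ E with i ∈ e, ∏ j ∈ e.erase i, w j := by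
        refine sum_le_sum fun e he => ?_
        obtain ⟨heE, hie⟩ := mem_filter.mp he
        rw [← mul_sum]
        calc c * ∑ f : Fin (k-1) → Fin n with image f univ = e.erase i, ∏ a, w (f a)
            ≤ c * ((k-1).factorial * ∏ j ∈ e.erase i, w j) := by
              gcongr
              have := sum_prod_comp_le_factorial_mul (e.erase i)
                (by rw [card_erase_of_mem hie, hcard e heE, Fintype.card_fin]) w
                fun j _ => hw j
              rwa [Fintype.card_fin] at this
          _ = ∏ j ∈ e.erase i, w j := by
              rw [← mul_assoc, one_div_mul_cancel (by positivity), one_mul]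

theorem adjT_nonneg (i : Fin n) (f : Fin (k-1) → Fin n) : 0 ≤ adjT n k E i f := by
  unfold adjT
  split_ifs <;> positivity

theorem norm_mul_norm_pow_le_sum_prod (hcard : ∀ e ∈ E, #e = k) {ρ : ℂ} {x : Fin n → ℂ}
    {i : Fin n} (heig : ∑ f, (adjT n k E i f : ℂ) * ∏ a, x (f a) = ρ * x i ^ (k-1)) :
    ‖ρ‖ * ‖x i‖ ^ (k-1) ≤ ∑ e ∈ E with i ∈ e, ∏ j ∈ e.erase i, ‖x j‖ :=
  calc ‖ρ‖ * ‖x i‖ ^ (k-1) = ‖∑ f, (adjT n k E i f : ℂ) * ∏ a, x (f a)‖ := by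
        rw [heig, norm_mul, norm_pow]
    _ ≤ ∑ f, ‖(adjT n k E i f : ℂ) * ∏ a, x (f a)‖ := norm_sum_le _ _
    _ = ∑ f, adjT n k E i f * ∏ a, ‖x (f a)‖ := by
        refine sum_congr rfl fun f _ => ?_
        rw [norm_mul, norm_prod, Complex.norm_real, Real.norm_of_nonneg (adjT_nonneg i f)]
    _ ≤ _ := sum_adjT_mul_prod_le hcard i _ fun j => norm_nonneg _

theorem avg2_nonneg (i : Fin n) : 0 ≤ avg2 n k E i := by
  unfold avg2
  positivity

theorem avg2_mul_hDeg_pow (i : Fin n) :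
    avg2 n k E i * (hDeg n E i : ℝ) ^ (k-1) =
      ∑ e ∈ E with i ∈ e, ∏ j ∈ e.erase i, (hDeg n E j : ℝ) := by
  rcases eq_or_ne (hDeg n E i) 0 with h | h
  · have hempty : ({e ∈ E | i ∈ e} : Finset _) = ∅ := card_eq_zero.mp h
    simp [avg2, hempty]
  · exact div_mul_cancel₀ _ (by positivity)

theorem sum_prod_hDeg_mul_le (i : Fin n) (z : Fin n → ℝ) {B : ℝ}
    (hB : ∀ e ∈ E, i ∈ e → ∏ j ∈ e.erase i, z j ≤ B) :
    ∑ e ∈ E with i ∈ e, ∏ j ∈ e.erase i, (hDeg n E j * z j) ≤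
      avg2 n k E i * (hDeg n E i : ℝ) ^ (k-1) * B := by
  rw [avg2_mul_hDeg_pow, sum_mul]
  refine sum_le_sum fun e he => ?_
  rw [prod_mul_distrib]
  exact mul_le_mul_of_nonneg_left (hB e (mem_filter.mp he).1 (mem_filter.mp he).2)
    (prod_nonneg fun j _ => by positivity)

theorem mul_pow_le_avg2_mul (hcard : ∀ e ∈ E, #e = k) {ρ : ℂ} {x : Fin n → ℂ} {i : Fin n}
    (heig : ∑ f, (adjT n k E i f : ℂ) * ∏ a, x (f a) = ρ * x i ^ (k-1))
    (hi : 0 < hDeg n E i) {z : Fin n → ℝ} (hz : ∀ j, ‖x j‖ = hDeg n E j * z j) {B : ℝ}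
    (hB : ∀ e ∈ E, i ∈ e → ∏ j ∈ e.erase i, z j ≤ B) :
    ‖ρ‖ * z i ^ (k-1) ≤ avg2 n k E i * B := by
  refine le_of_mul_le_mul_right ?_ (by positivity : (0 : ℝ) < (hDeg n E i : ℝ) ^ (k-1))
  calc ‖ρ‖ * z i ^ (k-1) * (hDeg n E i : ℝ) ^ (k-1) = ‖ρ‖ * ‖x i‖ ^ (k-1) := by
        rw [hz, mul_pow]; ring
    _ ≤ ∑ e ∈ E with i ∈ e, ∏ j ∈ e.erase i, ‖x j‖ := norm_mul_norm_pow_le_sum_prod hcard heig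
    _ ≤ avg2 n k E i * (hDeg n E i : ℝ) ^ (k-1) * B := by
        simpa only [hz] using sum_prod_hDeg_mul_le i z hB
    _ = avg2 n k E i * B * (hDeg n E i : ℝ) ^ (k-1) := by ring

theorem prod_le_mul_pow_of_forall_ne_le {ι : Type*} [DecidableEq ι] {s : Finset ι} {f : ι → ℝ}
    {p : ι} {b : ℝ} {m : ℕ} (hs : #s = m + 1) (hf : ∀ j ∈ s, 0 ≤ f j) (hb : 0 ≤ b)
    (hbp : b ≤ f p) (hle : ∀ j ∈ s, j ≠ p → f j ≤ b) : ∏ j ∈ s, f j ≤ f p * b ^ m := by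
  by_cases hps : p ∈ s
  · rw [← mul_prod_erase s f hps]
    refine mul_le_mul_of_nonneg_left ?_ (hb.trans hbp)
    refine (prod_le_prod (fun j hj => hf j (mem_of_mem_erase hj))
      fun j hj => hle j (mem_of_mem_erase hj) (ne_of_mem_erase hj)).trans_eq ?_
    rw [prod_const, card_erase_of_mem hps, hs, Nat.add_sub_cancel]
  · calc ∏ j ∈ s, f j ≤ b ^ (m + 1) := by
          refine (prod_le_prod hf fun j hj => hle j hj ?_).trans_eq (by rw [prod_const, hs])
          rintro rfl
          exact hps hj
      _ = b * b ^ m := pow_succ' b m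
      _ ≤ f p * b ^ m := by gcongr

theorem exists_ne_forall_le_and_forall_ne_le {α β : Type*} [Fintype α] [Nontrivial α]
    [LinearOrder β] (f : α → β) : ∃ p q, q ≠ p ∧ (∀ j, f j ≤ f p) ∧ ∀ j ≠ p, f j ≤ f q := by
  classical
  obtain ⟨p, -, hp⟩ := exists_max_image univ f univ_nonempty
  obtain ⟨j, hj⟩ := exists_ne p
  obtain ⟨q, hq, hqmax⟩ := exists_max_image (univ.erase p) f ⟨j, mem_erase.mpr ⟨hj, mem_univ j⟩⟩
  exact ⟨p, q, ne_of_mem_erase hq, fun j => hp j (mem_univ j),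
    fun j hj => hqmax j (mem_erase.mpr ⟨hj, mem_univ j⟩)⟩

theorem pow_le_max_mul_min_pow {r a b s t : ℝ} {m : ℕ} (hr : 0 ≤ r) (ha : 0 ≤ a) (hb : 0 ≤ b)
    (ht : 0 ≤ t) (hts : t ≤ s) (hs : 0 < s) (h₁ : r * s ^ (m+1) ≤ a * t ^ (m+1))
    (h₂ : r * t ^ (m+1) ≤ b * (s * t ^ m)) :
    r ^ (m+2) ≤ max a b * min a b ^ (m+1) := by
  rcases ht.eq_or_lt with rfl | ht
  · have hr0 : r = 0 := le_antisymm (le_of_mul_le_mul_right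
      (by simpa using h₁ : r * s ^ (m+1) ≤ 0 * s ^ (m+1)) (by positivity)) hr
    rw [hr0, zero_pow (by omega)]
    positivity
  have h₂' : r * t ≤ b * s := le_of_mul_le_mul_right
    (by linear_combination h₂ : r * t * t ^ m ≤ b * s * t ^ m) (by positivity)
  rcases le_total a b with hab | hba
  · rw [max_eq_right hab, min_eq_left hab]
    have hra : r ≤ a := le_of_mul_le_mul_right
      (h₁.trans (by gcongr : a * t ^ (m+1) ≤ a * s ^ (m+1))) (by positivity)
    have hr2 : r ^ 2 ≤ a * b := by
      refine le_of_mul_le_mul_right ?_ (by positivity : 0 < s ^ (m+1) * t)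
      calc r ^ 2 * (s ^ (m+1) * t) = (r * s ^ (m+1)) * (r * t) := by ring
        _ ≤ (a * t ^ (m+1)) * (b * s) := by gcongr
        _ = a * b * (t ^ m * (s * t)) := by ring
        _ ≤ a * b * (s ^ m * (s * t)) := by gcongr
        _ = a * b * (s ^ (m+1) * t) := by ring
    calc r ^ (m+2) = r ^ m * r ^ 2 := by ring
      _ ≤ a ^ m * (a * b) := by gcongr
      _ = b * a ^ (m+1) := by ring
  · rw [max_eq_left hba, min_eq_right hba]
    refine le_of_mul_le_mul_right ?_ (by positivity : 0 < (s * t) ^ (m+1))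
    calc r ^ (m+2) * (s * t) ^ (m+1) = (r * s ^ (m+1)) * (r * t) ^ (m+1) := by ring
      _ ≤ (a * t ^ (m+1)) * (b * s) ^ (m+1) := by gcongr
      _ = a * b ^ (m+1) * (s * t) ^ (m+1) := by ring

theorem Antitone.min_le_of_ne {β : Type*} [LinearOrder β] {f : Fin n → β} (hf : Antitone f)
    {p q : Fin n} (hpq : p ≠ q) (h1 : 1 < n) : min (f p) (f q) ≤ f ⟨1, h1⟩ := by
  have hpq' : (p : ℕ) ≠ q := fun h => hpq (Fin.ext h)
  rcases Nat.eq_zero_or_pos p with hp | hp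
  · exact (min_le_right _ _).trans (hf (Fin.le_def.mpr (by simp only; omega)))
  · exact (min_le_left _ _).trans (hf (Fin.le_def.mpr (by simp only; omega)))

theorem specRad_le {T : Fin n → (Fin (k-1) → Fin n) → ℝ} {C : ℝ} (hC : 0 ≤ C)
    (h : ∀ (ρ : ℂ) (x : Fin n → ℂ), x ≠ 0 →
      (∀ i, ∑ f, (T i f : ℂ) * ∏ a, x (f a) = ρ * x i ^ (k-1)) → ‖ρ‖ ≤ C) :
    specRad n k T ≤ C :=
  Real.sSup_le (by rintro _ ⟨ρ, rfl, x, hx, heig⟩; exact h ρ x hx heig) hC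

theorem le_rpow_mul_rpow_of_pow_le {r a b : ℝ} (hk : k ≠ 0) (hr : 0 ≤ r) (ha : 0 ≤ a)
    (hb : 0 ≤ b) (h : r ^ k ≤ a * b ^ (k-1)) :
    r ≤ a ^ ((1 : ℝ)/k) * b ^ (1 - (1 : ℝ)/k) := by
  have hk' : (k : ℝ) ≠ 0 := by exact_mod_cast hk
  calc r = (r ^ k) ^ (k : ℝ)⁻¹ := (Real.pow_rpow_inv_natCast hr hk).symm
    _ ≤ (a * b ^ (k-1)) ^ (k : ℝ)⁻¹ := Real.rpow_le_rpow (by positivity) h (by positivity)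
    _ = a ^ ((1 : ℝ)/k) * b ^ (1 - (1 : ℝ)/k) := by
        rw [Real.mul_rpow ha (by positivity), ← Real.rpow_natCast, ← Real.rpow_mul hb,
          Nat.cast_sub (by omega), one_div]
        congr 2
        field_simp
        simp

/-- Let `G` be a `k`-uniform hypergraph on `n` vertices without isolated vertices with
average 2-degrees `m₁ ≥ m₂ ≥ … ≥ m_n`. Then `ρ(G) ≤ m₁^{1/k} · m₂^{1-1/k}`. -/
theorem stmt3 (n k : ℕ) (hk : 2 ≤ k) (hkn : k ≤ n)
    (E : Finset (Finset (Fin n))) (hcard : ∀ e ∈ E, e.card = k)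
    (hiso : ∀ i : Fin n, 0 < hDeg n E i)
    (hsort : ∀ i j : Fin n, i ≤ j → avg2 n k E j ≤ avg2 n k E i) :
    specRad n k (adjT n k E) ≤
      (avg2 n k E ⟨0, by omega⟩) ^ ((1 : ℝ)/k) *
        (avg2 n k E ⟨1, by omega⟩) ^ (1 - (1 : ℝ)/k) := by
  have : Nontrivial (Fin n) := Fin.nontrivial_iff_two_le.mpr (by omega)
  have hanti : Antitone (avg2 n k E) := fun i j h => hsort i j h
  refine specRad_le (mul_nonneg (Real.rpow_nonneg (avg2_nonneg _) _)
    (Real.rpow_nonneg (avg2_nonneg _) _)) fun ρ x hx heig =>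
    le_rpow_mul_rpow_of_pow_le (by omega) (norm_nonneg ρ) (avg2_nonneg _) (avg2_nonneg _) ?_
  set z : Fin n → ℝ := fun j => ‖x j‖ / hDeg n E j
  have hz : ∀ j, ‖x j‖ = hDeg n E j * z j := fun j =>
    (mul_div_cancel₀ _ (Nat.cast_ne_zero.mpr (hiso j).ne')).symm
  have hz0 : ∀ j, 0 ≤ z j := fun j => by positivity
  obtain ⟨p, q, hqp, hp, hq⟩ := exists_ne_forall_le_and_forall_ne_le z
  have hzp : 0 < z p := by
    obtain ⟨j, hj⟩ := Function.ne_iff.mp hx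
    exact (div_pos (norm_pos_iff.mpr hj) (Nat.cast_pos.mpr (hiso j))).trans_le (hp j)
  have hvp : ‖ρ‖ * z p ^ (k-1) ≤ avg2 n k E p * z q ^ (k-1) :=
    mul_pow_le_avg2_mul hcard (heig p) (hiso p) hz fun e he hpe =>
      (prod_le_prod (fun j _ => hz0 j) fun j hj => hq j (ne_of_mem_erase hj)).trans_eq
        (by rw [prod_const, card_erase_of_mem hpe, hcard e he])
  have hvq : ‖ρ‖ * z q ^ (k-1) ≤ avg2 n k E q * (z p * z q ^ (k-2)) :=
    mul_pow_le_avg2_mul hcard (heig q) (hiso q) hz fun e he hqe =>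
      prod_le_mul_pow_of_forall_ne_le (by rw [card_erase_of_mem hqe, hcard e he]; omega)
        (fun j _ => hz0 j) (hz0 q) (hp q) fun j _ hjp => hq j hjp
  obtain ⟨m, rfl⟩ : ∃ m, k = m + 2 := ⟨k - 2, by omega⟩
  have hmin : 0 ≤ min (avg2 n (m+2) E p) (avg2 n (m+2) E q) :=
    le_min (avg2_nonneg p) (avg2_nonneg q)
  calc ‖ρ‖ ^ (m+2) ≤ max (avg2 n (m+2) E p) (avg2 n (m+2) E q) *
        min (avg2 n (m+2) E p) (avg2 n (m+2) E q) ^ (m+1) :=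
      pow_le_max_mul_min_pow (norm_nonneg ρ) (avg2_nonneg p) (avg2_nonneg q) (hz0 q) (hp q) hzp
        hvp hvq
    _ ≤ _ := mul_le_mul (max_le (hanti (Nat.zero_le _)) (hanti (Nat.zero_le _)))
      (pow_le_pow_left₀ hmin (hanti.min_le_of_ne hqp.symm (by omega)) _)
      (pow_nonneg hmin _) (avg2_nonneg _)
end
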